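/- For the K-receiver combination network with two nested messages with two common receivers (common message M_{\overline{φ}} for all receivers, private message M_{\overline{K−1.K}} for receivers 1,...,K−2), the inequality 2R_{\overline{φ}} + R_{\overline{K−1.K}} ≤ C_{↓_{W_j}{\overline{K−1.K}}} + C_{W_{K−1}} + C_{W_K} holds for every achievable rate pair and every j ∈ [1:K−2], where ↓_{W_j}{\overline{K−1.K}} = {S ∈ W_j : S ∩ {K−1,K} = ∅}. The proof uses H(Y_{K−1}^n, Y_K^n, Y_j^n | M_{\overline{φ}}) ≤ H(Y_{K−1}^n|M_{\overline{φ}}) + H(Y_K^n|M_{\overline{φ}}) + H(Y_j^n | Y_{K−1}^n, Y_K^n, M_{\overline{φ}}), submodularity/chain rule of entropy, Fano's inequality, and the identity W_j \ (W_{K−1} ∪ W_K) = ↓_{W_j}{\overline{K−1.K}}. -/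

import Mathlib

/-!
Fix a code and let `G` be the set of message pairs `(m₁, m₂)` that are decoded correctly, so
`#G ≥ (1 - ε) M₁ M₂`. Receiver `j` sees only links in `W_{K-1}`, in `W_K`, or in
`↓_{W_j}{\bar{K-1.K}}`, so on the fibre of `G` over a common message `m₂` the private message is
a function of the outputs `Y_{K-1}`, `Y_K`, `Y_↓` of these three link sets. Hence the fibre has at
most `a(m₂) b(m₂) |Y_↓|` elements, where `a(m₂)`, `b(m₂)` count the outputs of receivers `K-1`,
`K` on it; it also has at most `M₁` elements. Receivers `K-1` and `K` decode `m₂`, so their outputs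
on different fibres are distinct and `∑ a ≤ |Y_{K-1}|`, `∑ b ≤ |Y_K|`. Cauchy–Schwarz over the
fibres gives `#G² ≤ M₁ |Y_{K-1}| |Y_K| |Y_↓|`, that is
`log M₁ + 2 log M₂ + 2 log (1 - ε) ≤ n (C_↓ + C_{W_{K-1}} + C_{W_K})`; let `ε → 0`.
-/

open Finset

/-- Achievability over the `K`-receiver combination network with two nested
messages and two common receivers: the private message `M_{\bar{K-1.K}}`
(rate `R1`) must be decoded by receivers `0,…,K-3` (0-indexed) and the common
message `M_{\barφ}` (rate `R2`) by all `K` receivers. -/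
def NestedTwoCommonAchievable (K : ℕ)
    (V : {S : Finset (Fin K) // S.Nonempty} → Type)
    [∀ S, Fintype (V S)] (R1 R2 : ℝ) : Prop :=
  ∀ ε : ℝ, 0 < ε → ∃ (n M1 M2 : ℕ), 0 < n ∧ 0 < M1 ∧ 0 < M2 ∧
    R1 - ε ≤ Real.logb 2 M1 / n ∧ R2 - ε ≤ Real.logb 2 M2 / n ∧
    ∃ (enc : Fin M1 → Fin M2 → Fin n → ∀ S : {S : Finset (Fin K) // S.Nonempty}, V S)
      (dec : ∀ i : Fin K,
        (Fin n → ∀ T : {S : {S : Finset (Fin K) // S.Nonempty} // i ∈ S.1}, V T.1) →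
          Fin M1 × Fin M2),
      ((univ.filter (fun mm : Fin M1 × Fin M2 =>
          ¬ ((∀ i : Fin K, (i : ℕ) < K - 2 →
                (dec i (fun t T => enc mm.1 mm.2 t T.1)).1 = mm.1) ∧
             (∀ i : Fin K,
                (dec i (fun t T => enc mm.1 mm.2 t T.1)).2 = mm.2)))).card : ℝ) ≤
        ε * (M1 * M2)

open Real Filter Topology

section Counting

variable {ι α β X Y Z : Type*}

theorem card_le_card_image_mul_card_image_mul [Fintype Z] [DecidableEq X] [DecidableEq Y]
    {s : Finset ι} (f : ι → X) (g : ι → Y) (h : ι → Z)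
    (hinj : Set.InjOn (fun i => (f i, g i, h i)) s) :
    #s ≤ #(s.image f) * #(s.image g) * Fintype.card Z := by
  calc #s ≤ #(s.image f ×ˢ s.image g ×ˢ (univ : Finset Z)) :=
        card_le_card_of_injOn _ (fun i hi => mem_product.2
          ⟨mem_image_of_mem f hi, mem_product.2 ⟨mem_image_of_mem g hi, mem_univ _⟩⟩) hinj
    _ = _ := by simp [card_product, mul_assoc]

theorem sum_card_image_filter_le [Fintype Y] [DecidableEq β] [DecidableEq Y]
    (s : Finset ι) (t : Finset β) (key : ι → β) (f : ι → Y) (dec : Y → β)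
    (hdec : ∀ i ∈ s, dec (f i) = key i) :
    ∑ b ∈ t, #((s.filter (key · = b)).image f) ≤ Fintype.card Y := by
  rw [← card_biUnion]
  · exact card_le_univ _
  · intro b _ b' _ hbb'
    simp only [Function.onFun, disjoint_left, mem_image, mem_filter]
    rintro _ ⟨i, ⟨hi, rfl⟩, rfl⟩ ⟨i', ⟨hi', hbi'⟩, hii'⟩
    exact hbb' (by rw [← hdec i hi, ← hii', hdec i' hi', hbi'])

theorem sq_card_le_of_decodable [Fintype α] [Fintype X] [Fintype Y] [Fintype Z]
    (G : Finset (α × β)) (fA : α × β → X) (fB : α × β → Y) (fC : α × β → Z)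
    (decA : X → β) (decB : Y → β)
    (hA : ∀ p ∈ G, decA (fA p) = p.2) (hB : ∀ p ∈ G, decB (fB p) = p.2)
    (hC : ∀ p ∈ G, ∀ q ∈ G, fA p = fA q → fB p = fB q → fC p = fC q → p.1 = q.1) :
    #G ^ 2 ≤ Fintype.card α * Fintype.card X * Fintype.card Y * Fintype.card Z := by
  classical
  set F : β → Finset (α × β) := fun b => G.filter (·.2 = b)
  have hF : ∀ b, F b ⊆ G := fun b => filter_subset _ _
  have hfst : ∀ b, #(F b) ≤ Fintype.card α := fun b =>
    card_le_card_of_injOn Prod.fst (fun _ _ => mem_univ _) fun p hp q hq hpq =>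
      Prod.ext hpq ((mem_filter.1 hp).2.trans (mem_filter.1 hq).2.symm)
  have hinj : Set.InjOn (fun p => (fA p, fB p, fC p)) G := fun p hp q hq hpq => by
    simp only [Prod.mk.injEq] at hpq
    obtain ⟨hfA, hfB, hfC⟩ := hpq
    exact Prod.ext (hC p hp q hq hfA hfB hfC) (by rw [← hA p hp, hfA, hA q hq])
  have hfib : ∀ b, #(F b) ^ 2 ≤
      Fintype.card α * Fintype.card Z * #((F b).image fA) * #((F b).image fB) := fun b => by
    rw [sq]
    calc #(F b) * #(F b)
        ≤ Fintype.card α * (#((F b).image fA) * #((F b).image fB) * Fintype.card Z) :=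
          Nat.mul_le_mul (hfst b)
            (card_le_card_image_mul_card_image_mul _ _ _ (hinj.mono (hF b)))
      _ = _ := by ring
  set t := G.image Prod.snd
  calc #G ^ 2 = (∑ b ∈ t, #(F b)) ^ 2 := by rw [card_eq_sum_card_image Prod.snd G]
    _ ≤ (∑ b ∈ t, Fintype.card α * Fintype.card Z * #((F b).image fA)) *
          ∑ b ∈ t, #((F b).image fB) :=
        sum_sq_le_sum_mul_sum_of_sq_le_mul t (fun _ _ => Nat.zero_le _)
          (fun _ _ => Nat.zero_le _) fun b _ => hfib b
    _ ≤ Fintype.card α * Fintype.card Z * Fintype.card X * Fintype.card Y := by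
        rw [← mul_sum]
        gcongr
        · exact sum_card_image_filter_le G t Prod.snd fA decA hA
        · exact sum_card_image_filter_le G t Prod.snd fB decB hB
    _ = _ := by ring

end Counting

section Links

variable {σ τ : Type*} {V : σ → Type*}

theorem restrict_eq_of_restrict_eq {x y : τ → ∀ s, V s} {P Q R : σ → Prop}
    (hP : (fun t (s : {s // P s}) => x t s.1) = fun t (s : {s // P s}) => y t s.1)
    (hQ : (fun t (s : {s // Q s}) => x t s.1) = fun t (s : {s // Q s}) => y t s.1)
    (hR : (fun t (s : {s // R s ∧ ¬P s ∧ ¬Q s}) => x t s.1) =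
      fun t (s : {s // R s ∧ ¬P s ∧ ¬Q s}) => y t s.1) :
    (fun t (s : {s // R s}) => x t s.1) = fun t (s : {s // R s}) => y t s.1 := by
  funext t s
  by_cases hp : P s
  · exact congrFun₂ hP t ⟨s, hp⟩
  by_cases hq : Q s
  · exact congrFun₂ hQ t ⟨s, hq⟩
  exact congrFun₂ hR t ⟨s, s.2, hp, hq⟩

variable [Fintype σ] [DecidableEq σ] [∀ s, Fintype (V s)]

variable (V) in
/-- The paper's `C_W` for the set `W` of links satisfying `P`. -/
noncomputable def capacity (P : σ → Prop) [DecidablePred P] : ℝ :=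
  ∑ s ∈ univ.filter P, logb 2 (Fintype.card (V s))

theorem logb_card_restrict [∀ s, Nonempty (V s)] (P : σ → Prop) [DecidablePred P] (n : ℕ) :
    logb 2 (Fintype.card (Fin n → ∀ s : {s // P s}, V s)) = n * capacity V P := by
  rw [Fintype.card_fun, Fintype.card_pi, Fintype.card_fin, Nat.cast_pow, Nat.cast_prod,
    logb_pow, logb_prod _ _ fun s _ => Nat.cast_ne_zero.2 Fintype.card_ne_zero, capacity,
    sum_subtype (p := P) (univ.filter P) (fun s => by simp) fun s => logb 2 (Fintype.card (V s))]

end Links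

theorem logb_add_two_mul_logb_le {a b c x : ℝ} (ha : 0 < a) (hb : 0 < b) (hc : 0 < c)
    (h : (c * (a * b)) ^ 2 ≤ a * x) :
    logb 2 a + 2 * logb 2 b + 2 * logb 2 c ≤ logb 2 x := by
  have hx : c ^ 2 * a * b ^ 2 ≤ x := le_of_mul_le_mul_left (by linarith) ha
  calc logb 2 a + 2 * logb 2 b + 2 * logb 2 c = logb 2 (c ^ 2 * a * b ^ 2) := by
        rw [logb_mul (by positivity) (by positivity), logb_mul (by positivity) ha.ne',
          logb_pow, logb_pow]
        push_cast
        ring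
    _ ≤ logb 2 x := logb_le_logb_of_le one_lt_two (by positivity) hx

theorem one_sub_mul_le_card_filter {M1 M2 : ℕ} {p : Fin M1 × Fin M2 → Prop} [DecidablePred p]
    {ε : ℝ} (h : (#(univ.filter fun m => ¬ p m) : ℝ) ≤ ε * (M1 * M2)) :
    (1 - ε) * (M1 * M2) ≤ #(univ.filter p) := by
  have hsplit := congrArg (Nat.cast (R := ℝ)) (card_filter_add_card_filter_not (s := univ) p)
  rw [card_univ, Fintype.card_prod, Fintype.card_fin, Fintype.card_fin] at hsplit
  push_cast at hsplit
  linarith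

theorem two_mul_add_le_of_logb_le {n a b c R1 R2 ε : ℝ} (hn : 1 ≤ n) (hε : 0 ≤ ε) (hε1 : ε < 1)
    (hR1 : R1 - ε ≤ a / n) (hR2 : R2 - ε ≤ b / n)
    (h : a + 2 * b + 2 * logb 2 (1 - ε) ≤ n * c) :
    2 * R2 + R1 ≤ c + (3 * ε - 2 * logb 2 (1 - ε)) := by
  have hL : 0 ≤ -2 * logb 2 (1 - ε) := by
    have := logb_nonpos one_lt_two (sub_nonneg.2 hε1.le) (by linarith)
    linarith
  rw [le_div_iff₀ (by linarith)] at hR1 hR2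
  have hd : n * (2 * R2 + R1 - 3 * ε - c) ≤ -2 * logb 2 (1 - ε) := by linarith
  rcases le_or_gt (2 * R2 + R1 - 3 * ε - c) 0 with hneg | hpos
  · linarith
  · nlinarith

theorem le_of_forall_le_add_penalty {x c : ℝ}
    (h : ∀ ε, 0 < ε → ε < 1 → x ≤ c + (3 * ε - 2 * logb 2 (1 - ε))) : x ≤ c := by
  have hpen : Tendsto (fun ε : ℝ => 3 * ε - 2 * logb 2 (1 - ε)) (𝓝[>] 0) (𝓝 0) := by
    have : ContinuousAt (fun ε : ℝ => 3 * ε - 2 * logb 2 (1 - ε)) 0 := by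
      fun_prop (disch := norm_num)
    simpa using this.tendsto.mono_left nhdsWithin_le_nhds
  simpa using ge_of_tendsto (hpen.const_add c) (by
    filter_upwards [Ioo_mem_nhdsGT one_pos] with ε hε using h ε hε.1 hε.2)

section Network

variable {K n M1 M2 : ℕ} {V : {S : Finset (Fin K) // S.Nonempty} → Type} [∀ S, Fintype (V S)]

theorem logb_add_two_mul_logb_le_of_decodes [∀ S, Nonempty (V S)]
    (enc : Fin M1 → Fin M2 → Fin n → ∀ S : {S : Finset (Fin K) // S.Nonempty}, V S)
    (dec : ∀ i : Fin K,
        (Fin n → ∀ T : {S : {S : Finset (Fin K) // S.Nonempty} // i ∈ S.1}, V T.1) →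
          Fin M1 × Fin M2)
    (j kA kB : Fin K) (G : Finset (Fin M1 × Fin M2))
    (hj : ∀ m ∈ G, (dec j fun t T => enc m.1 m.2 t T.1).1 = m.1)
    (hA : ∀ m ∈ G, (dec kA fun t T => enc m.1 m.2 t T.1).2 = m.2)
    (hB : ∀ m ∈ G, (dec kB fun t T => enc m.1 m.2 t T.1).2 = m.2)
    {ε : ℝ} (hε : ε < 1) (hM1 : 0 < M1) (hM2 : 0 < M2) (hG : (1 - ε) * (M1 * M2) ≤ #G) :
    logb 2 M1 + 2 * logb 2 M2 + 2 * logb 2 (1 - ε) ≤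
      n * (capacity V (fun S => j ∈ S.1 ∧ kA ∉ S.1 ∧ kB ∉ S.1) + capacity V (kA ∈ ·.1) +
        capacity V (kB ∈ ·.1)) := by
  have hcount := sq_card_le_of_decodable G
    (fun m t (T : {S : {S : Finset (Fin K) // S.Nonempty} // kA ∈ S.1}) => enc m.1 m.2 t T.1)
    (fun m t (T : {S : {S : Finset (Fin K) // S.Nonempty} // kB ∈ S.1}) => enc m.1 m.2 t T.1)
    (fun m t (T : {S : {S : Finset (Fin K) // S.Nonempty} // j ∈ S.1 ∧ kA ∉ S.1 ∧ kB ∉ S.1}) =>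
      enc m.1 m.2 t T.1)
    (fun y => (dec kA y).2) (fun y => (dec kB y).2) hA hB
    fun p hp q hq hpqA hpqB hpqC => by
      rw [← hj p hp, ← hj q hq, restrict_eq_of_restrict_eq hpqA hpqB hpqC]
  rw [Fintype.card_fin] at hcount
  have hM1' : (0 : ℝ) < M1 := Nat.cast_pos.2 hM1
  have hcard : ∀ (P : {S : Finset (Fin K) // S.Nonempty} → Prop) [DecidablePred P],
      (Fintype.card (Fin n → ∀ T : {S // P S}, V T.1) : ℝ) ≠ 0 :=
    fun P _ => Nat.cast_ne_zero.2 Fintype.card_ne_zero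
  rw [mul_add, mul_add, ← logb_card_restrict, ← logb_card_restrict, ← logb_card_restrict,
    ← logb_mul (hcard _) (hcard _), ← logb_mul (mul_ne_zero (hcard _) (hcard _)) (hcard _)]
  refine logb_add_two_mul_logb_le hM1' (Nat.cast_pos.2 hM2) (sub_pos.2 hε)
    ((pow_le_pow_left₀ (by positivity) hG 2).trans ?_)
  have hcount' := (Nat.cast_le (α := ℝ)).2 hcount
  push_cast at hcount'
  linarith

end Network

/-- The paper's receivers `K-1`, `K` are the 0-indexed `⟨K-2,_⟩`, `⟨K-1,_⟩`, and
`C_S = log₂ |V S|`. -/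
theorem stmt_14 (K : ℕ) (hK : 3 ≤ K)
    (V : {S : Finset (Fin K) // S.Nonempty} → Type)
    [∀ S, Fintype (V S)] [∀ S, Nonempty (V S)]
    (R1 R2 : ℝ) (hach : NestedTwoCommonAchievable K V R1 R2) :
    ∀ j : Fin K, (j : ℕ) < K - 2 →
      2 * R2 + R1 ≤
        (∑ S ∈ univ.filter (fun S : {S : Finset (Fin K) // S.Nonempty} =>
            j ∈ S.1 ∧ (⟨K - 2, by omega⟩ : Fin K) ∉ S.1 ∧ (⟨K - 1, by omega⟩ : Fin K) ∉ S.1),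
          Real.logb 2 (Fintype.card (V S))) +
        (∑ S ∈ univ.filter (fun S : {S : Finset (Fin K) // S.Nonempty} =>
            (⟨K - 2, by omega⟩ : Fin K) ∈ S.1),
          Real.logb 2 (Fintype.card (V S))) +
        ∑ S ∈ univ.filter (fun S : {S : Finset (Fin K) // S.Nonempty} =>
            (⟨K - 1, by omega⟩ : Fin K) ∈ S.1),
          Real.logb 2 (Fintype.card (V S)) := by
  intro j hj
  refine le_of_forall_le_add_penalty fun ε hε hε1 => ?_
  obtain ⟨n, M1, M2, hn, hM1, hM2, hR1, hR2, enc, dec, herr⟩ := hach ε hε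
  refine two_mul_add_le_of_logb_le (Nat.one_le_cast.2 hn) hε.le hε1 hR1 hR2 ?_
  exact logb_add_two_mul_logb_le_of_decodes enc dec j _ _ _
    (fun m hm => (mem_filter.1 hm).2.1 j hj) (fun m hm => (mem_filter.1 hm).2.2 _)
    (fun m hm => (mem_filter.1 hm).2.2 _) hε1 hM1 hM2 (one_sub_mul_le_card_filter herr)
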